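/- For i = 1, 2, let G_i be an m_i-γ_t-critical graph of order Δ(G_i) + m_i with minimum degree δ(G_i) ≥ 2, and let v_i ∈ V(G_i) be a vertex of maximum degree in G_i. If every connected component of the subgraph of G_i induced by V(G_i) − N[v_i] is a path P_2 (for each i), then the vertex amalgamation G of G_1 and G_2 at v_1 and v_2 is an (m_1 + m_2 − 1)-γ_t-critical graph of order Δ(G) + m_1 + m_2 − 1, where Δ(G) = Δ(G_1) + Δ(G_2). -/

import Mathlib

/-!
Write `A` for the amalgamation and `v` for the glued vertex. Gluing a minimum total dominating
set of `G₁` to a set of size `< m₂` dominating `G₂ - v₂` gives `γₜ(A) ≤ m₁ + m₂ - 1`; gluing the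
sets that witness the criticality of `G₁` and `G₂` at the deleted vertex and at the glued vertex
shows `γₜ(A - x) ≤ m₁ + m₂ - 2` for every `x`.

For the lower bound, a total dominating set `S` of `A` restricts to sets `Tᵢ ⊆ V(Gᵢ)` dominating
every vertex except `vᵢ`. The order condition `|V(Gᵢ)| = Δ(Gᵢ) + mᵢ` says that `vᵢ` has exactly
`mᵢ` non-neighbours, itself included. If `Tᵢ` contains no neighbour of `vᵢ`, then every
non-neighbour `r ≠ vᵢ` lies in `Tᵢ`, being the only vertex that can dominate its partner in the
`P₂` component of `r`. Hence `mᵢ ≤ |Tᵢ ∪ {vᵢ}|` always, and `mᵢ ≤ |Tᵢ|` on a side from which `v`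
is dominated; as `S` counts `v` once and the `Tᵢ` count it twice, `m₁ + m₂ ≤ |S| + 1`.
-/

open scoped Classical

namespace SimpleGraph

variable {V : Type*}

/-- A set `S` is a total dominating set if every vertex is adjacent to a vertex of `S`. -/
def IsTotalDomSet (G : SimpleGraph V) (S : Set V) : Prop :=
  ∀ v : V, ∃ u ∈ S, G.Adj v u

/-- The total domination number: minimum cardinality of a total dominating set. -/
noncomputable def totalDomNum (G : SimpleGraph V) [Fintype V] : ℕ :=
  sInf {n : ℕ | ∃ S : Finset V, G.IsTotalDomSet ↑S ∧ S.card = n}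

/-- The graph obtained by deleting the vertex `v`. -/
def deleteVert (G : SimpleGraph V) (v : V) : SimpleGraph {u : V // u ≠ v} :=
  G.induce {u : V | u ≠ v}

/-- A support vertex is a vertex adjacent to a leaf (a vertex of degree one). -/
noncomputable def IsSupportVertex (G : SimpleGraph V) [Fintype V] (v : V) : Prop :=
  ∃ u : V, G.Adj v u ∧ G.degree u = 1

/-- `G` is total domination vertex critical: it has no isolated vertex and deleting any
vertex that is not a support vertex decreases the total domination number. -/
noncomputable def IsTotalDomCritical (G : SimpleGraph V) [Fintype V] : Prop :=
  (∀ v : V, 0 < G.degree v) ∧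
  ∀ v : V, ¬ G.IsSupportVertex v →
    (G.deleteVert v).totalDomNum < G.totalDomNum

/-- The vertex amalgamation of `G₁` and `G₂` identifying `v₁` with `v₂`. -/
def amalgamation {V₁ V₂ : Type*} (G₁ : SimpleGraph V₁) (G₂ : SimpleGraph V₂)
    (v₁ : V₁) (v₂ : V₂) : SimpleGraph (V₁ ⊕ {x : V₂ // x ≠ v₂}) where
  Adj x y :=
    match x, y with
    | Sum.inl a, Sum.inl b => G₁.Adj a b
    | Sum.inl a, Sum.inr b => a = v₁ ∧ G₂.Adj v₂ b.1
    | Sum.inr a, Sum.inl b => b = v₁ ∧ G₂.Adj v₂ a.1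
    | Sum.inr a, Sum.inr b => G₂.Adj a.1 b.1
  symm := by
    constructor
    rintro (a | a) (b | b) h
    · exact G₁.adj_symm h
    · exact h
    · exact h
    · exact G₂.adj_symm h
  loopless := by
    constructor
    rintro (a | a) h
    · exact G₁.irrefl h
    · exact G₂.irrefl h

open Set

section Domination

variable {W : Type*} {G : SimpleGraph V} {H : SimpleGraph W}

def Dominates (G : SimpleGraph V) (S D : Set V) : Prop :=
  ∀ w ∈ D, ∃ u ∈ S, G.Adj w u

lemma isTotalDomSet_iff_dominates_univ {S : Set V} :
    G.IsTotalDomSet S ↔ G.Dominates S univ := by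
  simp [IsTotalDomSet, Dominates]

lemma Dominates.isTotalDomSet {S : Set V} {v : V} (h : G.Dominates S {v}ᶜ)
    (hv : ∃ u ∈ S, G.Adj v u) : G.IsTotalDomSet S := fun w => by
  by_cases hw : w = v
  · exact hw ▸ hv
  · exact h w hw

lemma Dominates.mono {S S' D D' : Set V} (h : G.Dominates S D) (hS : S ⊆ S') (hD : D' ⊆ D) :
    G.Dominates S' D' := fun w hw =>
  let ⟨u, hu, hwu⟩ := h w (hD hw)
  ⟨u, hS hu, hwu⟩

lemma Dominates.union {S S' D D' : Set V} (h : G.Dominates S D) (h' : G.Dominates S' D') :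
    G.Dominates (S ∪ S') (D ∪ D') := by
  rintro w (hw | hw)
  · exact h.mono subset_union_left subset_rfl w hw
  · exact h'.mono subset_union_right subset_rfl w hw

lemma Dominates.image (φ : G →g H) {S D : Set V} (h : G.Dominates S D) :
    H.Dominates (φ '' S) (φ '' D) := by
  rintro _ ⟨w, hw, rfl⟩
  obtain ⟨u, hu, hwu⟩ := h w hw
  exact ⟨φ u, mem_image_of_mem φ hu, φ.map_adj hwu⟩

lemma Dominates.preimage (φ : G ↪g H) {S : Set W} {D : Set V} (h : H.Dominates S (φ '' D))
    (hD : ∀ a ∈ D, ∀ w, H.Adj (φ a) w → w ∈ range φ) : G.Dominates (φ ⁻¹' S) D := by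
  intro a ha
  obtain ⟨u, hu, hau⟩ := h (φ a) (mem_image_of_mem φ ha)
  obtain ⟨b, rfl⟩ := hD a ha u hau
  exact ⟨b, hu, φ.map_adj_iff.mp hau⟩

end Domination

section Embedding

variable {W : Type*} {G : SimpleGraph V} {H : SimpleGraph W} [Fintype V] [Fintype W]

lemma Embedding.map_neighborFinset_subset (φ : G ↪g H) (a : V) :
    (G.neighborFinset a).map φ.toEmbedding ⊆ H.neighborFinset (φ a) := by
  intro w hw
  obtain ⟨b, hb, rfl⟩ := Finset.mem_map.mp hw
  simpa using hb

lemma Embedding.degree_le (φ : G ↪g H) (a : V) : G.degree a ≤ H.degree (φ a) := by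
  simpa [card_neighborFinset_eq_degree] using
    Finset.card_le_card (Embedding.map_neighborFinset_subset φ a)

lemma Embedding.degree_eq_of_forall_adj_mem_range (φ : G ↪g H) {a : V}
    (h : ∀ w, H.Adj (φ a) w → w ∈ range φ) : H.degree (φ a) = G.degree a := by
  have : H.neighborFinset (φ a) = (G.neighborFinset a).map φ.toEmbedding := by
    refine (Finset.Subset.antisymm ?_ (Embedding.map_neighborFinset_subset φ a))
    intro w hw
    obtain ⟨b, rfl⟩ := h w ((mem_neighborFinset _ _ _).mp hw)
    simpa using hw
  rw [← card_neighborFinset_eq_degree, this, Finset.card_map, card_neighborFinset_eq_degree]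

end Embedding

section TotalDomNum

variable [Fintype V] {G : SimpleGraph V}

lemma totalDomNum_le_card {S : Finset V} (h : G.IsTotalDomSet S) : G.totalDomNum ≤ S.card :=
  Nat.sInf_le ⟨S, h, rfl⟩

lemma exists_isTotalDomSet_card_eq {S : Finset V} (hS : G.IsTotalDomSet S) :
    ∃ T : Finset V, G.IsTotalDomSet T ∧ T.card = G.totalDomNum :=
  Nat.sInf_mem (s := {n | ∃ T : Finset V, G.IsTotalDomSet T ∧ T.card = n}) ⟨_, S, hS, rfl⟩

lemma le_totalDomNum {n : ℕ} {S : Finset V} (hS : G.IsTotalDomSet S)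
    (h : ∀ T : Finset V, G.IsTotalDomSet T → n ≤ T.card) : n ≤ G.totalDomNum := by
  obtain ⟨T, hT, hTcard⟩ := exists_isTotalDomSet_card_eq hS
  exact hTcard ▸ h T hT

lemma isTotalDomSet_univ (h : ∀ w, ∃ u, G.Adj w u) : G.IsTotalDomSet (Finset.univ : Finset V) :=
  fun w => by simpa using h w

lemma totalDomNum_deleteVert_le {x : V} {S : Finset V} (hx : x ∉ S)
    (hS : G.Dominates S {x}ᶜ) : (G.deleteVert x).totalDomNum ≤ S.card := by
  have hT : (G.deleteVert x).IsTotalDomSet ↑(S.subtype (· ≠ x)) := by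
    rintro ⟨w, hw⟩
    obtain ⟨u, hu, hwu⟩ := hS w hw
    exact ⟨⟨u, ne_of_mem_of_not_mem hu hx⟩, by simpa using hu, hwu⟩
  calc _ ≤ (S.subtype (· ≠ x)).card := totalDomNum_le_card hT
    _ = S.card := by
      rw [Finset.card_subtype, Finset.filter_true_of_mem fun u hu => ne_of_mem_of_not_mem hu hx]

lemma exists_adj_ne_of_two_le_minDegree (hδ : 2 ≤ G.minDegree) (w x : V) :
    ∃ u, u ≠ x ∧ G.Adj w u := by
  have : 1 < (G.neighborFinset w).card := by
    rw [card_neighborFinset_eq_degree]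
    exact hδ.trans (G.minDegree_le_degree w)
  obtain ⟨u, hu, hux⟩ := (Finset.one_lt_card_iff_nontrivial.mp this).exists_ne x
  exact ⟨u, hux, (mem_neighborFinset _ _ _).mp hu⟩

lemma exists_dominates_compl_singleton (hδ : 2 ≤ G.minDegree) (hG : G.IsTotalDomCritical)
    (x : V) : ∃ S : Finset V, x ∉ S ∧ G.Dominates S {x}ᶜ ∧ S.card < G.totalDomNum := by
  have hx : ¬ G.IsSupportVertex x := by
    rintro ⟨u, -, hu⟩
    have := G.minDegree_le_degree u
    omega
  -- `G - x` has no isolated vertex, so its `totalDomNum` is attained and not the junk `sInf ∅ = 0`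
  obtain ⟨T, hT, hTcard⟩ := exists_isTotalDomSet_card_eq <|
    isTotalDomSet_univ (G := G.deleteVert x) fun ⟨w, _⟩ =>
      let ⟨u, hux, hwu⟩ := exists_adj_ne_of_two_le_minDegree hδ w x
      ⟨⟨u, hux⟩, hwu⟩
  refine ⟨T.map (Function.Embedding.subtype _), by simp, ?_, ?_⟩
  · rintro w (hw : w ≠ x)
    obtain ⟨u, hu, hwu⟩ := hT ⟨w, hw⟩
    exact ⟨u, Finset.mem_map_of_mem _ hu, hwu⟩
  · rw [Finset.card_map, hTcard]
    exact hG.2 x hx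

end TotalDomNum

section Extremal

variable {G : SimpleGraph V} {v : V}

lemma existsUnique_adj_of_forall_iso_pathGraph_two {W : Type*} {H : SimpleGraph W}
    (hc : ∀ c : H.ConnectedComponent, Nonempty (H.induce c.supp ≃g pathGraph 2)) (x : W) :
    ∃! y, H.Adj x y := by
  obtain ⟨e⟩ := hc (H.connectedComponentMk x)
  rw [pathGraph_two_eq_top] at e
  have mem_supp {y : W} (h : H.Adj x y) : y ∈ (H.connectedComponentMk x).supp :=
    (ConnectedComponent.connectedComponentMk_eq_of_adj h).symm
  set i := e ⟨x, rfl⟩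
  have e_ne {y : W} (h : H.Adj x y) : e ⟨y, mem_supp h⟩ ≠ i :=
    ((e.map_adj_iff (v := ⟨x, rfl⟩) (w := ⟨y, mem_supp h⟩)).mpr h).symm
  obtain ⟨j, hj⟩ := exists_ne i
  refine ⟨e.symm j, ?_, fun y hy => ?_⟩
  · have : (⊤ : SimpleGraph (Fin 2)).Adj (e ⟨x, rfl⟩) (e (e.symm j)) := by simpa using hj.symm
    exact e.map_adj_iff.mp this
  · have : e ⟨y, mem_supp hy⟩ = j := by
      have := e_ne hy
      omega
    rw [← this, RelIso.symm_apply_apply]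

lemma subset_of_dominates_of_forall_iso_pathGraph_two
    (hc : ∀ c : (G.induce ({v} ∪ G.neighborSet v)ᶜ).ConnectedComponent,
      Nonempty ((G.induce ({v} ∪ G.neighborSet v)ᶜ).induce c.supp ≃g pathGraph 2))
    {T : Set V} (hT : G.Dominates T ({v} ∪ G.neighborSet v)ᶜ) (hTv : ∀ u ∈ T, ¬ G.Adj v u) :
    ({v} ∪ G.neighborSet v)ᶜ ⊆ T := by
  intro r hr
  have partner := existsUnique_adj_of_forall_iso_pathGraph_two hc
  obtain ⟨p, hrp, -⟩ := partner ⟨r, hr⟩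
  -- whatever dominates the partner `p` of `r` lies off `N[v]`, so it is `p`'s only partner `r`
  obtain ⟨q, hqT, hpq⟩ := hT p p.2
  have hq : q ∈ ({v} ∪ G.neighborSet v)ᶜ := by
    have hp := p.2
    simp only [mem_compl_iff, mem_union, mem_singleton_iff, mem_neighborSet, not_or] at hp ⊢
    exact ⟨by rintro rfl; exact hp.2 hpq.symm, hTv q hqT⟩
  have hqr : (⟨q, hq⟩ : ↥({v} ∪ G.neighborSet v)ᶜ) = ⟨r, hr⟩ :=
    (partner p).unique (y₁ := ⟨q, hq⟩) hpq hrp.symm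
  exact Subtype.mk.inj hqr ▸ hqT

lemma totalDomNum_le_card_insert [Fintype V]
    (hn : G.degree v + G.totalDomNum ≤ Fintype.card V)
    (hc : ∀ c : (G.induce ({v} ∪ G.neighborSet v)ᶜ).ConnectedComponent,
      Nonempty ((G.induce ({v} ∪ G.neighborSet v)ᶜ).induce c.supp ≃g pathGraph 2))
    {T : Finset V} (hT : G.Dominates T {v}ᶜ) : G.totalDomNum ≤ (insert v T).card := by
  by_cases hvT : ∃ u ∈ T, G.Adj v u
  · exact (totalDomNum_le_card (hT.isTotalDomSet hvT)).trans
      (Finset.card_le_card (Finset.subset_insert v T))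
  · push Not at hvT
    have hR := subset_of_dominates_of_forall_iso_pathGraph_two hc
      (hT.mono subset_rfl fun w hw => fun h => hw (Or.inl h)) hvT
    have hsub : (G.neighborFinset v)ᶜ ⊆ insert v T := by
      intro w hw
      rw [Finset.mem_compl, mem_neighborFinset] at hw
      by_cases hwv : w = v
      · exact hwv ▸ Finset.mem_insert_self v T
      · exact Finset.mem_insert_of_mem (hR fun h => h.elim hwv hw)
    have := Finset.card_le_card hsub
    rw [Finset.card_compl, card_neighborFinset_eq_degree] at this
    omega

end Extremal

namespace amalgamation

variable {V₁ V₂ : Type*} {G₁ : SimpleGraph V₁} {G₂ : SimpleGraph V₂} {v₁ : V₁} {v₂ : V₂}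

@[simp] lemma adj_inl_inl {a b : V₁} :
    (amalgamation G₁ G₂ v₁ v₂).Adj (.inl a) (.inl b) ↔ G₁.Adj a b := Iff.rfl

@[simp] lemma adj_inl_inr {a : V₁} {y : {x // x ≠ v₂}} :
    (amalgamation G₁ G₂ v₁ v₂).Adj (.inl a) (.inr y) ↔ a = v₁ ∧ G₂.Adj v₂ y := Iff.rfl

@[simp] lemma adj_inr_inl {y : {x // x ≠ v₂}} {a : V₁} :
    (amalgamation G₁ G₂ v₁ v₂).Adj (.inr y) (.inl a) ↔ a = v₁ ∧ G₂.Adj v₂ y := Iff.rfl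

@[simp] lemma adj_inr_inr {y z : {x // x ≠ v₂}} :
    (amalgamation G₁ G₂ v₁ v₂).Adj (.inr y) (.inr z) ↔ G₂.Adj y z := Iff.rfl

variable (G₁ G₂ v₁ v₂) in
def left : G₁ ↪g amalgamation G₁ G₂ v₁ v₂ where
  toFun := Sum.inl
  inj' := Sum.inl_injective
  map_rel_iff' := Iff.rfl

variable (G₁ G₂ v₁ v₂) in
noncomputable def right : G₂ ↪g amalgamation G₁ G₂ v₁ v₂ where
  toFun b := if h : b = v₂ then .inl v₁ else .inr ⟨b, h⟩
  inj' b c := by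
    by_cases hb : b = v₂ <;> by_cases hc : c = v₂ <;> simp [hb, hc]
  map_rel_iff' {b c} := by
    by_cases hb : b = v₂ <;> by_cases hc : c = v₂ <;> simp [hb, hc, G₂.adj_comm _ v₂]

local notation "ι₁" => left G₁ G₂ v₁ v₂
local notation "ι₂" => right G₁ G₂ v₁ v₂

@[simp] lemma left_apply (a : V₁) : ι₁ a = .inl a := rfl

lemma right_self : ι₂ v₂ = .inl v₁ := dif_pos rfl

lemma right_of_ne {b : V₂} (hb : b ≠ v₂) :
    ι₂ b = .inr ⟨b, hb⟩ := dif_neg hb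

@[simp] lemma right_val (y : {x // x ≠ v₂}) :
    ι₂ y.1 = .inr y := right_of_ne y.2

lemma left_eq_right_iff {a : V₁} {b : V₂} :
    ι₁ a = ι₂ b ↔ a = v₁ ∧ b = v₂ := by
  by_cases hb : b = v₂
  · simp [hb, right_self]
  · simp [hb, right_of_ne hb]

lemma mem_range_left_or_right (w : V₁ ⊕ {x // x ≠ v₂}) :
    w ∈ range ι₁ ∨ w ∈ range ι₂ := by
  rcases w with a | y
  · exact .inl ⟨a, rfl⟩
  · exact .inr ⟨y.1, right_val y⟩

lemma mem_range_left_of_adj {a : V₁} (ha : a ≠ v₁) {w : V₁ ⊕ {x // x ≠ v₂}}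
    (h : (amalgamation G₁ G₂ v₁ v₂).Adj (ι₁ a) w) : w ∈ range ι₁ := by
  rcases w with b | y
  · exact ⟨b, rfl⟩
  · exact absurd (adj_inl_inr.mp h).1 ha

lemma mem_range_right_of_adj {b : V₂} (hb : b ≠ v₂) {w : V₁ ⊕ {x // x ≠ v₂}}
    (h : (amalgamation G₁ G₂ v₁ v₂).Adj (ι₂ b) w) : w ∈ range ι₂ := by
  rcases w with a | y
  · rw [right_of_ne hb, adj_inr_inl] at h
    exact ⟨v₂, h.1 ▸ right_self⟩
  · exact ⟨y.1, right_val y⟩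

lemma compl_image_left_compl_subset (D : Set V₁) :
    (ι₁ '' Dᶜ)ᶜ ⊆ ι₁ '' D ∪ ι₂ '' {v₂}ᶜ := by
  rintro (a | y) hw
  · exact .inl ⟨a, by_contra fun ha => hw ⟨a, ha, rfl⟩, rfl⟩
  · exact .inr ⟨y.1, y.2, right_val y⟩

lemma compl_image_right_compl_subset (D : Set V₂) :
    (ι₂ '' Dᶜ)ᶜ ⊆ ι₁ '' {v₁}ᶜ ∪ ι₂ '' D := by
  rintro (a | y) hw
  · by_cases ha : a = v₁
    · subst ha
      exact .inr ⟨v₂, by_contra fun hv => hw ⟨v₂, hv, right_self⟩, right_self⟩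
    · exact .inl ⟨a, ha, rfl⟩
  · exact .inr ⟨y.1, by_contra fun hy => hw ⟨y.1, hy, right_val y⟩, right_val y⟩

lemma card_preimage_add_card_preimage_le (S : Finset (V₁ ⊕ {x // x ≠ v₂})) :
    (S.preimage ι₁ (ι₁).injective.injOn).card + (S.preimage ι₂ (ι₂).injective.injOn).card ≤
      S.card + (S ∩ {.inl v₁}).card := by
  set T₁ := S.preimage ι₁ (ι₁).injective.injOn
  set T₂ := S.preimage ι₂ (ι₂).injective.injOn
  have hunion : T₁.image ι₁ ∪ T₂.image ι₂ ⊆ S := by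
    simp [T₁, T₂, Finset.union_subset_iff, Finset.image_subset_iff]
  have hinter : T₁.image ι₁ ∩ T₂.image ι₂ ⊆ S ∩ {.inl v₁} := by
    intro w hw
    obtain ⟨⟨a, ha, rfl⟩, ⟨b, -, hba⟩⟩ : (∃ a ∈ T₁, ι₁ a = w) ∧ ∃ b ∈ T₂, ι₂ b = w := by
      simpa only [Finset.mem_inter, Finset.mem_image] using hw
    obtain ⟨rfl, -⟩ := left_eq_right_iff.mp hba.symm
    exact Finset.mem_inter.mpr ⟨Finset.mem_preimage.mp ha, Finset.mem_singleton_self _⟩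
  have := Finset.card_union_add_card_inter (T₁.image ι₁) (T₂.image ι₂)
  rw [Finset.card_image_of_injective _ (ι₁).injective,
    Finset.card_image_of_injective _ (ι₂).injective] at this
  have := Finset.card_le_card hunion
  have := Finset.card_le_card hinter
  omega

section Finite

variable [Fintype V₁] [Fintype V₂]

lemma degree_left_of_ne {a : V₁} (ha : a ≠ v₁) :
    (amalgamation G₁ G₂ v₁ v₂).degree (ι₁ a) = G₁.degree a :=
  Embedding.degree_eq_of_forall_adj_mem_range _ fun _ => mem_range_left_of_adj ha

lemma degree_right_of_ne {b : V₂} (hb : b ≠ v₂) :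
    (amalgamation G₁ G₂ v₁ v₂).degree (ι₂ b) = G₂.degree b :=
  Embedding.degree_eq_of_forall_adj_mem_range _ fun _ => mem_range_right_of_adj hb

lemma degree_inl_self :
    (amalgamation G₁ G₂ v₁ v₂).degree (.inl v₁) = G₁.degree v₁ + G₂.degree v₂ := by
  have : (amalgamation G₁ G₂ v₁ v₂).neighborFinset (.inl v₁) =
      (G₁.neighborFinset v₁).disjSum ((G₂.neighborFinset v₂).subtype (· ≠ v₂)) := by
    ext (a | y) <;> simp
  rw [← card_neighborFinset_eq_degree, this, Finset.card_disjSum, Finset.card_subtype,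
    Finset.filter_true_of_mem fun b hb => ((mem_neighborFinset _ _ _).mp hb).ne',
    card_neighborFinset_eq_degree, card_neighborFinset_eq_degree]

lemma maxDegree_eq (hv₁ : G₁.degree v₁ = G₁.maxDegree) (hv₂ : G₂.degree v₂ = G₂.maxDegree) :
    (amalgamation G₁ G₂ v₁ v₂).maxDegree = G₁.maxDegree + G₂.maxDegree := by
  refine le_antisymm (maxDegree_le_of_forall_degree_le _ _ fun w => ?_) ?_
  · rcases w with a | y
    · by_cases ha : a = v₁
      · rw [ha, degree_inl_self, hv₁, hv₂]
      · change (amalgamation G₁ G₂ v₁ v₂).degree (ι₁ a) ≤ _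
        rw [degree_left_of_ne ha]
        exact (G₁.degree_le_maxDegree a).trans (Nat.le_add_right _ _)
    · rw [← right_val, degree_right_of_ne y.2]
      exact (G₂.degree_le_maxDegree y).trans (Nat.le_add_left _ _)
  · rw [← hv₁, ← hv₂, ← degree_inl_self]
    exact degree_le_maxDegree _ _

lemma degree_pos (h₁ : ∀ a, 0 < G₁.degree a) (h₂ : ∀ b, 0 < G₂.degree b)
    (w : V₁ ⊕ {x // x ≠ v₂}) : 0 < (amalgamation G₁ G₂ v₁ v₂).degree w := by
  rcases mem_range_left_or_right (G₁ := G₁) (G₂ := G₂) (v₁ := v₁) w with ⟨a, rfl⟩ | ⟨b, rfl⟩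
  · exact (h₁ a).trans_le (Embedding.degree_le _ a)
  · exact (h₂ b).trans_le (Embedding.degree_le _ b)

lemma card_add_one : Fintype.card (V₁ ⊕ {x // x ≠ v₂}) + 1 = Fintype.card V₁ + Fintype.card V₂ := by
  have : 0 < Fintype.card V₂ := Fintype.card_pos_iff.mpr ⟨v₂⟩
  simp only [Fintype.card_sum, ne_eq, Fintype.card_subtype_compl, Fintype.card_unique]
  omega

lemma exists_isTotalDomSet_card_add_one_le (hG₁ : ∀ a, ∃ b, G₁.Adj a b)
    (hδ₂ : 2 ≤ G₂.minDegree) (h₂ : G₂.IsTotalDomCritical) :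
    ∃ S : Finset (V₁ ⊕ {x // x ≠ v₂}), (amalgamation G₁ G₂ v₁ v₂).IsTotalDomSet S ∧
      S.card + 1 ≤ G₁.totalDomNum + G₂.totalDomNum := by
  obtain ⟨T₁, hT₁, hT₁card⟩ := exists_isTotalDomSet_card_eq (isTotalDomSet_univ hG₁)
  obtain ⟨S₂, -, hS₂, hS₂card⟩ := exists_dominates_compl_singleton hδ₂ h₂ v₂
  refine ⟨T₁.image ι₁ ∪ S₂.image ι₂, ?_, ?_⟩
  · rw [isTotalDomSet_iff_dominates_univ]
    refine (((isTotalDomSet_iff_dominates_univ.mp hT₁).image (ι₁).toHom).union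
      (hS₂.image (ι₂).toHom)).mono (by simp) ?_
    simpa using compl_image_left_compl_subset (G₂ := G₂) (v₁ := v₁) (v₂ := v₂) univ
  · have := (Finset.card_union_le (T₁.image ι₁) (S₂.image ι₂)).trans
      (add_le_add Finset.card_image_le Finset.card_image_le)
    omega

lemma totalDomNum_deleteVert_le_card_add_card {x : V₁ ⊕ {x // x ≠ v₂}} {x₁ : V₁} {x₂ : V₂}
    {S₁ : Finset V₁} {S₂ : Finset V₂} (hS₁ : G₁.Dominates S₁ {x₁}ᶜ) (hS₂ : G₂.Dominates S₂ {x₂}ᶜ)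
    (hx : x ∉ ι₁ '' S₁ ∪ ι₂ '' S₂) (hcover : {x}ᶜ ⊆ ι₁ '' {x₁}ᶜ ∪ ι₂ '' {x₂}ᶜ) :
    ((amalgamation G₁ G₂ v₁ v₂).deleteVert x).totalDomNum ≤ S₁.card + S₂.card := by
  calc _ ≤ (S₁.image ι₁ ∪ S₂.image ι₂).card :=
        totalDomNum_deleteVert_le (by simpa using hx)
          (((hS₁.image (ι₁).toHom).union (hS₂.image (ι₂).toHom)).mono (by simp) hcover)
    _ ≤ _ := (Finset.card_union_le _ _).trans (add_le_add Finset.card_image_le Finset.card_image_le)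

lemma totalDomNum_deleteVert_add_two_le (hδ₁ : 2 ≤ G₁.minDegree) (h₁ : G₁.IsTotalDomCritical)
    (hδ₂ : 2 ≤ G₂.minDegree) (h₂ : G₂.IsTotalDomCritical) (x : V₁ ⊕ {x // x ≠ v₂}) :
    ((amalgamation G₁ G₂ v₁ v₂).deleteVert x).totalDomNum + 2 ≤
      G₁.totalDomNum + G₂.totalDomNum := by
  rcases mem_range_left_or_right (G₁ := G₁) (G₂ := G₂) (v₁ := v₁) x with ⟨a, rfl⟩ | ⟨b, rfl⟩
  · obtain ⟨S₁, ha, hS₁, hS₁card⟩ := exists_dominates_compl_singleton hδ₁ h₁ a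
    obtain ⟨S₂, hv, hS₂, hS₂card⟩ := exists_dominates_compl_singleton hδ₂ h₂ v₂
    have := totalDomNum_deleteVert_le_card_add_card (x := ι₁ a) hS₁ hS₂ ?_
      (by simpa using compl_image_left_compl_subset (G₂ := G₂) (v₁ := v₁) (v₂ := v₂) {a}ᶜ)
    · omega
    rintro (⟨c, hc, hca⟩ | ⟨c, hc, hca⟩)
    · exact ha ((ι₁).injective hca ▸ hc)
    · exact hv ((left_eq_right_iff.mp hca.symm).2 ▸ hc)
  · obtain ⟨S₁, hv, hS₁, hS₁card⟩ := exists_dominates_compl_singleton hδ₁ h₁ v₁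
    obtain ⟨S₂, hb, hS₂, hS₂card⟩ := exists_dominates_compl_singleton hδ₂ h₂ b
    have := totalDomNum_deleteVert_le_card_add_card (x := ι₂ b) hS₁ hS₂ ?_
      (by simpa using compl_image_right_compl_subset (G₁ := G₁) (v₁ := v₁) (v₂ := v₂) {b}ᶜ)
    · omega
    rintro (⟨c, hc, hcb⟩ | ⟨c, hc, hcb⟩)
    · exact hv ((left_eq_right_iff.mp hcb).1 ▸ hc)
    · exact hb ((ι₂).injective hcb ▸ hc)

lemma totalDomNum_add_totalDomNum_le
    (hn₁ : G₁.degree v₁ + G₁.totalDomNum ≤ Fintype.card V₁)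
    (hn₂ : G₂.degree v₂ + G₂.totalDomNum ≤ Fintype.card V₂)
    (hc₁ : ∀ c : (G₁.induce ({v₁} ∪ G₁.neighborSet v₁)ᶜ).ConnectedComponent,
      Nonempty ((G₁.induce ({v₁} ∪ G₁.neighborSet v₁)ᶜ).induce c.supp ≃g pathGraph 2))
    (hc₂ : ∀ c : (G₂.induce ({v₂} ∪ G₂.neighborSet v₂)ᶜ).ConnectedComponent,
      Nonempty ((G₂.induce ({v₂} ∪ G₂.neighborSet v₂)ᶜ).induce c.supp ≃g pathGraph 2))
    {S : Finset (V₁ ⊕ {x // x ≠ v₂})} (hS : (amalgamation G₁ G₂ v₁ v₂).IsTotalDomSet S) :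
    G₁.totalDomNum + G₂.totalDomNum ≤ S.card + 1 := by
  set T₁ := S.preimage ι₁ (ι₁).injective.injOn
  set T₂ := S.preimage ι₂ (ι₂).injective.injOn
  have hdom := isTotalDomSet_iff_dominates_univ.mp hS
  have hT₁ : G₁.Dominates T₁ {v₁}ᶜ := by
    rw [Finset.coe_preimage]
    exact (hdom.mono subset_rfl (subset_univ _)).preimage ι₁ fun a ha _ => mem_range_left_of_adj ha
  have hT₂ : G₂.Dominates T₂ {v₂}ᶜ := by
    rw [Finset.coe_preimage]
    exact (hdom.mono subset_rfl (subset_univ _)).preimage ι₂ fun b hb _ => mem_range_right_of_adj hb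
  have hγ₁ := totalDomNum_le_card_insert hn₁ hc₁ hT₁
  have hγ₂ := totalDomNum_le_card_insert hn₂ hc₂ hT₂
  have hcard : T₁.card + T₂.card ≤ S.card + (S ∩ {.inl v₁}).card :=
    card_preimage_add_card_preimage_le S
  by_cases hv : Sum.inl v₁ ∈ S
  · have hv₁ : v₁ ∈ T₁ := by simpa [T₁] using hv
    have hv₂ : v₂ ∈ T₂ := by simpa [T₂, right_self] using hv
    rw [Finset.insert_eq_of_mem hv₁] at hγ₁
    rw [Finset.insert_eq_of_mem hv₂] at hγ₂
    have := (Finset.card_le_card (Finset.inter_subset_right (s₁ := S))).trans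
      (Finset.card_singleton (Sum.inl v₁ : V₁ ⊕ {x // x ≠ v₂})).le
    omega
  · rw [Finset.inter_singleton_of_notMem hv, Finset.card_empty] at hcard
    have := Finset.card_insert_le v₁ T₁
    have := Finset.card_insert_le v₂ T₂
    -- `v` is dominated from one of the two sides, and that side is then totally dominated
    obtain ⟨u, hu, hvu⟩ := hS (.inl v₁)
    rcases mem_range_left_or_right (G₁ := G₁) (G₂ := G₂) (v₁ := v₁) u with ⟨a, rfl⟩ | ⟨b, rfl⟩
    · have := totalDomNum_le_card (hT₁.isTotalDomSet ⟨a, by simpa [T₁] using hu, hvu⟩)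
      omega
    · rw [← right_self (G₁ := G₁)] at hvu
      have := totalDomNum_le_card
        (hT₂.isTotalDomSet ⟨b, by simpa [T₂] using hu, (ι₂).map_adj_iff.mp hvu⟩)
      omega

end Finite

end amalgamation

/-- amalgamating two extremal critical graphs along vertices of maximum
degree, all of whose components off the closed neighborhood are `P₂`'s, yields an
`(m₁ + m₂ - 1)`-`γₜ`-critical graph of order `Δ(G) + m₁ + m₂ - 1`,
where `Δ(G) = Δ(G₁) + Δ(G₂)`. -/
theorem stmt2 {V₁ V₂ : Type*} [Fintype V₁] [Fintype V₂]
    (G₁ : SimpleGraph V₁) (G₂ : SimpleGraph V₂) (m₁ m₂ : ℕ) (v₁ : V₁) (v₂ : V₂)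
    (h₁ : G₁.IsTotalDomCritical) (hm₁ : G₁.totalDomNum = m₁)
    (h₂ : G₂.IsTotalDomCritical) (hm₂ : G₂.totalDomNum = m₂)
    (hn₁ : Fintype.card V₁ = G₁.maxDegree + m₁)
    (hn₂ : Fintype.card V₂ = G₂.maxDegree + m₂)
    (hδ₁ : 2 ≤ G₁.minDegree) (hδ₂ : 2 ≤ G₂.minDegree)
    (hv₁ : G₁.degree v₁ = G₁.maxDegree) (hv₂ : G₂.degree v₂ = G₂.maxDegree)
    (hc₁ : ∀ c : (G₁.induce ({v₁} ∪ G₁.neighborSet v₁)ᶜ).ConnectedComponent,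
      Nonempty ((G₁.induce ({v₁} ∪ G₁.neighborSet v₁)ᶜ).induce c.supp ≃g pathGraph 2))
    (hc₂ : ∀ c : (G₂.induce ({v₂} ∪ G₂.neighborSet v₂)ᶜ).ConnectedComponent,
      Nonempty ((G₂.induce ({v₂} ∪ G₂.neighborSet v₂)ᶜ).induce c.supp ≃g pathGraph 2)) :
    (amalgamation G₁ G₂ v₁ v₂).IsTotalDomCritical ∧
    (amalgamation G₁ G₂ v₁ v₂).totalDomNum = m₁ + m₂ - 1 ∧
    (amalgamation G₁ G₂ v₁ v₂).maxDegree = G₁.maxDegree + G₂.maxDegree ∧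
    Fintype.card (V₁ ⊕ {x : V₂ // x ≠ v₂}) =
      (amalgamation G₁ G₂ v₁ v₂).maxDegree + (m₁ + m₂ - 1) := by
  subst hm₁ hm₂
  obtain ⟨S, hS, hScard⟩ := amalgamation.exists_isTotalDomSet_card_add_one_le (v₁ := v₁)
    (fun a => (G₁.degree_pos_iff_exists_adj a).mp (h₁.1 a)) hδ₂ h₂
  have hγ : (amalgamation G₁ G₂ v₁ v₂).totalDomNum = G₁.totalDomNum + G₂.totalDomNum - 1 := by
    refine le_antisymm (by have := totalDomNum_le_card hS; omega) (le_totalDomNum hS fun T hT => ?_)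
    have := amalgamation.totalDomNum_add_totalDomNum_le (by omega) (by omega) hc₁ hc₂ hT
    omega
  have hΔ := amalgamation.maxDegree_eq hv₁ hv₂
  refine ⟨⟨amalgamation.degree_pos h₁.1 h₂.1, fun x _ => ?_⟩, hγ, hΔ, ?_⟩
  · have hlt : ((amalgamation G₁ G₂ v₁ v₂).deleteVert x).totalDomNum <
        G₁.totalDomNum + G₂.totalDomNum - 1 := by
      have := amalgamation.totalDomNum_deleteVert_add_two_le (v₁ := v₁) hδ₁ h₁ hδ₂ h₂ x
      omega
    exact hγ ▸ hlt
  · have := amalgamation.card_add_one (v₂ := v₂) (V₁ := V₁)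
    omega

end SimpleGraph
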